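/- arXiv:math/0309402 — 3 statements merged into one kernel-verified Lean document; each statement's English description precedes it below -/
import Mathlib

section
/- Let ℰ be a right 𝒜-module with a strongly non-degenerate 𝒜-valued inner product ⟨·,·⟩ (i.e., x ↦ ⟨x,·⟩ is a bijection onto Hom_𝒜(ℰ,𝒜)). Then for any other 𝒜-valued inner product ⟨·,·⟩' on ℰ there exists a unique adjointable endomorphism H of ℰ with H = H* such that ⟨x,y⟩' = ⟨x, Hy⟩ for all x, y. -/
/-!
Strong non-degeneracy lets us choose, for every `x`, the vector `H x` representing the
`𝒜`-linear functional `⟨x,·⟩'`, so that `⟨H x, y⟩ = ⟨x, y⟩'`. Injectivity of `x ↦ ⟨x,·⟩`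
makes `H` right `𝒜`-linear, and hermitian symmetry of both forms turns `⟨H x, y⟩ = ⟨x, y⟩'`
into `⟨x, H y⟩ = ⟨x, y⟩'`, which gives both self-adjointness and uniqueness.
-/

namespace SesquilinearForm

open MulOpposite

theorem add_left_of_hermitian {A E : Type*} [AddMonoid A] [StarAddMonoid A] [Add E]
    {ip : E → E → A} (herm : ∀ x y, ip x y = star (ip y x))
    (add2 : ∀ x y z, ip x (y + z) = ip x y + ip x z) (x y z : E) :
    ip (x + y) z = ip x z + ip y z := by
  rw [herm, add2, star_add, ← herm, ← herm]

theorem op_smul_left_of_hermitian {A E : Type*} [Mul A] [StarMul A] [SMul Aᵐᵒᵖ E]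
    {ip : E → E → A} (herm : ∀ x y, ip x y = star (ip y x))
    (lin2 : ∀ x y (a : A), ip x (op a • y) = ip x y * a) (a : A) (x y : E) :
    ip (op a • x) y = star a * ip x y := by
  rw [herm, lin2, star_mul, ← herm]

theorem eq_of_forall_right_eq {A E : Type*} [Star A] {ip : E → E → A}
    (herm : ∀ x y, ip x y = star (ip y x))
    (hinj : ∀ x x' : E, (∀ y, ip x y = ip x' y) → x = x') {y y' : E}
    (h : ∀ x, ip x y = ip x y') : y = y' :=
  hinj y y' fun x => by rw [herm, h, ← herm]

theorem map_add_of_represents {A E : Type*} [Add A] [Add E] {ip ip' : E → E → A} {H : E → E}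
    (hinj : ∀ x x' : E, (∀ y, ip x y = ip x' y) → x = x')
    (hH : ∀ x y, ip' x y = ip (H x) y)
    (add1 : ∀ x y z, ip (x + y) z = ip x z + ip y z)
    (add1' : ∀ x y z, ip' (x + y) z = ip' x z + ip' y z) (x y : E) :
    H (x + y) = H x + H y :=
  hinj _ _ fun z => by rw [← hH, add1', add1, hH, hH]

theorem map_op_smul_of_represents {A E : Type*} [Mul A] [Star A] [SMul Aᵐᵒᵖ E]
    {ip ip' : E → E → A} {H : E → E}
    (hinj : ∀ x x' : E, (∀ y, ip x y = ip x' y) → x = x')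
    (hH : ∀ x y, ip' x y = ip (H x) y)
    (lin1 : ∀ (a : A) x y, ip (op a • x) y = star a * ip x y)
    (lin1' : ∀ (a : A) x y, ip' (op a • x) y = star a * ip' x y) (a : A) (x : E) :
    H (op a • x) = op a • H x :=
  hinj _ _ fun z => by rw [← hH, lin1', lin1, hH]

end SesquilinearForm

open SesquilinearForm in
/-- on a right `𝒜`-module with a strongly non-degenerate inner product
`⟨·,·⟩`, any other inner product `⟨·,·⟩'` is represented by a unique hermitian
adjointable endomorphism `H`: `⟨x,y⟩' = ⟨x, Hy⟩`. Right modules are encoded as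
modules over `Aᵐᵒᵖ`, and right-`𝒜`-linear maps as plain functions with the
appropriate properties. -/
theorem stmt_6 {A E : Type*} [Ring A] [StarRing A] [AddCommGroup E] [Module Aᵐᵒᵖ E]
    (ip ip' : E → E → A)
    (herm : ∀ x y, ip x y = star (ip y x))
    (add2 : ∀ x y z, ip x (y + z) = ip x y + ip x z)
    (lin2 : ∀ x y (a : A), ip x (MulOpposite.op a • y) = ip x y * a)
    (herm' : ∀ x y, ip' x y = star (ip' y x))
    (add2' : ∀ x y z, ip' x (y + z) = ip' x y + ip' x z)
    (lin2' : ∀ x y (a : A), ip' x (MulOpposite.op a • y) = ip' x y * a)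
    -- strong non-degeneracy of `ip`: `x ↦ ⟨x,·⟩` is a bijection onto `Hom_𝒜(ℰ,𝒜)`
    (hinj : ∀ x x' : E, (∀ y, ip x y = ip x' y) → x = x')
    (hsurj : ∀ f : E → A, (∀ y z, f (y + z) = f y + f z) →
      (∀ (a : A) y, f (MulOpposite.op a • y) = f y * a) → ∃ x, ∀ y, f y = ip x y) :
    ∃! H : E → E,
      (∀ y z, H (y + z) = H y + H z) ∧
      (∀ (a : A) y, H (MulOpposite.op a • y) = MulOpposite.op a • H y) ∧
      (∀ x y, ip x (H y) = ip (H x) y) ∧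
      (∀ x y, ip' x y = ip x (H y)) := by
  choose H hH using fun x => hsurj (ip' x) (add2' x) fun a y => lin2' x y a
  have represents_right : ∀ x y, ip' x y = ip x (H y) := fun x y => by
    rw [herm', hH, ← herm]
  refine ⟨H, ⟨?_, ?_, fun x y => by rw [← represents_right, hH], represents_right⟩, ?_⟩
  · exact map_add_of_represents hinj hH (add_left_of_hermitian herm add2)
      (add_left_of_hermitian herm' add2')
  · exact map_op_smul_of_represents hinj hH (op_smul_left_of_hermitian herm lin2)
      (op_smul_left_of_hermitian herm' lin2')
  · rintro H' ⟨-, -, -, hH'⟩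
    funext y
    exact eq_of_forall_right_eq herm hinj fun x => by rw [← hH', represents_right]
end

section
/- Let 𝒜₁, 𝒜₂ be *-algebras and ℰ₁, ℰ₂ right modules with completely positive inner products ⟨·,·⟩₁, ⟨·,·⟩₂ respectively. Then the external tensor product inner product on ℰ₁ ⊗_C ℰ₂ over 𝒜₁ ⊗_C 𝒜₂, determined by ⟨x₁⊗x₂, y₁⊗y₂⟩ = ⟨x₁,y₁⟩₁ ⊗ ⟨x₂,y₂⟩₂, is completely positive. -/
/-- `c ∈ C` is a nonnegative real. -/
def NonnegC (R : Type*) {C : Type*} [CommRing R] [LinearOrder R] [IsStrictOrderedRing R] [CommRing C]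
    [Algebra R C] (c : C) : Prop :=
  ∃ r : R, 0 ≤ r ∧ c = algebraMap R C r

/-- positivity of an algebra element via positive linear functionals -/
def IsPosElem (R : Type*) (C : Type*) {A : Type*} [CommRing R] [LinearOrder R] [IsStrictOrderedRing R]
    [CommRing C] [Algebra R C] [NonUnitalRing A] [StarRing A] [Module C A]
    (a : A) : Prop :=
  ∀ ω : A →ₗ[C] C, (∀ b : A, NonnegC R (ω (star b * b))) → NonnegC R (ω a)

/-!
Index the summands of `Φ^α = Σᵢ x₁ᵢ^α ⊗ x₂ᵢ^α` by pairs `(α, i)`. The Gram matrix of the `Φ^α`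
is obtained from the Gram matrices `G₁`, `G₂` of the families `x₁ᵢ^α`, `x₂ᵢ^α` by tensoring
entrywise and summing over each `(i, j)`-block; write `G₁ ⋆ G₂` for this pairing. For a positive
functional `ω` on `Mₙ(A₁ ⊗ A₂)`, `ω (X* X ⋆ Y* Y)` is a sum of values `ω (U* U)` with `U` of rank
one, hence nonnegative. Testing positivity of `G₁` against `X ↦ ω (X ⋆ Y* Y)` and then positivity
of `G₂` against `Y ↦ ω (G₁ ⋆ Y)` gives `ω (G₁ ⋆ G₂) ≥ 0`.
-/

section NonnegC

open Matrix

variable {R C : Type*} [CommRing R] [LinearOrder R] [IsStrictOrderedRing R] [CommRing C]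
  [Algebra R C]

lemma nonnegC_zero : NonnegC R (0 : C) :=
  ⟨0, le_rfl, (map_zero _).symm⟩

lemma NonnegC.add {c d : C} (hc : NonnegC R c) (hd : NonnegC R d) : NonnegC R (c + d) := by
  obtain ⟨r, hr, rfl⟩ := hc
  obtain ⟨s, hs, rfl⟩ := hd
  exact ⟨r + s, add_nonneg hr hs, (map_add _ r s).symm⟩

lemma nonnegC_sum {ι : Type*} {s : Finset ι} {f : ι → C} (h : ∀ i ∈ s, NonnegC R (f i)) :
    NonnegC R (∑ i ∈ s, f i) :=
  Finset.sum_induction f _ (fun _ _ => NonnegC.add) nonnegC_zero h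

lemma IsPosElem.reindex {A ι κ : Type*} [NonUnitalRing A] [StarRing A] [Module C A]
    [Fintype ι] [Fintype κ] (e : ι ≃ κ) {M : Matrix ι ι A} (hM : IsPosElem R C M) :
    IsPosElem R C (Matrix.reindex e e M) := by
  intro ω hω
  refine hM (ω ∘ₗ (reindexLinearEquiv C A e e).toLinearMap) fun b => ?_
  have hmul : Matrix.reindex e e (star b * b) =
      star (Matrix.reindex e e b) * Matrix.reindex e e b := by
    rw [star_eq_conjTranspose, star_eq_conjTranspose, conjTranspose_reindex, reindex_apply,
      reindex_apply, reindex_apply, submatrix_mul_equiv]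
  simpa [hmul] using hω (Matrix.reindex e e b)

lemma isPosElem_gram_of_fin {A E ι : Type*} [NonUnitalRing A] [StarRing A] [Module C A]
    [Fintype ι] (ip : E → E → A)
    (cp : ∀ (k : ℕ) (x : Fin k → E), IsPosElem R C (of fun α β => ip (x α) (x β))) (x : ι → E) :
    IsPosElem R C (of fun α β => ip (x α) (x β)) := by
  let e := Fintype.equivFin ι
  convert (cp _ (x ∘ e.symm)).reindex e.symm
  ext
  simp

end NonnegC

section TensorGram

open TensorProduct Matrix

variable {R C A₁ A₂ : Type*} [CommRing R] [LinearOrder R] [IsStrictOrderedRing R] [CommRing C]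
  [Algebra R C] [Ring A₁] [Algebra C A₁] [Ring A₂] [Algebra C A₂]
  {ι κ : Type*} [Fintype κ]

/-- If `P`, `Q` are the Gram matrices of families `x₁ (α, i)`, `x₂ (α, i)`, then
`blockTensorSum P Q` is the Gram matrix of the family `∑ i, x₁ (α, i) ⊗ x₂ (α, i)`
for the external tensor product inner product. -/
def blockTensorSum :
    Matrix (ι × κ) (ι × κ) A₁ →ₗ[C] Matrix (ι × κ) (ι × κ) A₂ →ₗ[C] Matrix ι ι (A₁ ⊗[C] A₂) :=
  LinearMap.mk₂ C (fun P Q => of fun α β => ∑ i, ∑ j, P (α, i) (β, j) ⊗ₜ Q (α, i) (β, j))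
    (fun _ _ _ => by ext; simp [add_tmul, Finset.sum_add_distrib])
    (fun _ _ _ => by ext; simp [smul_tmul', Finset.smul_sum])
    (fun _ _ _ => by ext; simp [tmul_add, Finset.sum_add_distrib])
    (fun _ _ _ => by ext; simp [tmul_smul, Finset.smul_sum])

lemma blockTensorSum_apply (P : Matrix (ι × κ) (ι × κ) A₁) (Q : Matrix (ι × κ) (ι × κ) A₂)
    (α β : ι) :
    blockTensorSum (C := C) P Q α β = ∑ i, ∑ j, P (α, i) (β, j) ⊗ₜ Q (α, i) (β, j) :=
  rfl

end TensorGram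

section Positivity

open TensorProduct Matrix

variable {R C : Type*} [CommRing R] [LinearOrder R] [IsStrictOrderedRing R] [CommRing C]
  [Algebra R C] {ι : Type*} [Fintype ι]

lemma nonnegC_apply_rankOne {B : Type*} [Ring B] [Module C B] (st : B → B)
    (ω : Matrix ι ι B →ₗ[C] C)
    (hω : ∀ U : Matrix ι ι B, NonnegC R (ω (of (fun i j => st (U j i)) * U))) (v : ι → B) :
    NonnegC R (ω (of fun α β => st (v α) * v β)) := by
  classical
  cases isEmpty_or_nonempty ι with
  | inl _ => simpa [Subsingleton.elim (of fun α β => st (v α) * v β) 0] using hω 0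
  | inr h =>
    obtain ⟨i₀⟩ := h
    convert hω (of fun m β => if m = i₀ then v β else 0) using 2
    ext α β
    rw [mul_apply, Finset.sum_eq_single i₀ (fun m _ hm => by simp [hm]) (by simp)]
    simp

variable {A₁ A₂ : Type*} [Ring A₁] [StarRing A₁] [Algebra C A₁] [Ring A₂] [StarRing A₂]
  [Algebra C A₂] {κ : Type*} [Fintype κ]

lemma nonnegC_apply_blockTensorSum_star_mul_self (st : A₁ ⊗[C] A₂ →+ A₁ ⊗[C] A₂)
    (hst : ∀ (a : A₁) (b : A₂), st (a ⊗ₜ[C] b) = star a ⊗ₜ[C] star b)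
    (ω : Matrix ι ι (A₁ ⊗[C] A₂) →ₗ[C] C)
    (hω : ∀ U, NonnegC R (ω (of (fun i j => st (U j i)) * U)))
    (X : Matrix (ι × κ) (ι × κ) A₁) (Y : Matrix (ι × κ) (ι × κ) A₂) :
    NonnegC R (ω (blockTensorSum (star X * X) (star Y * Y))) := by
  set v : ι × κ → ι × κ → ι → A₁ ⊗[C] A₂ := fun p q α => ∑ i, X p (α, i) ⊗ₜ Y q (α, i)
  have hsum : blockTensorSum (star X * X) (star Y * Y) =
      ∑ p, ∑ q, of fun α β => st (v p q α) * v p q β := by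
    ext α β
    simp only [blockTensorSum_apply, Matrix.sum_apply, of_apply, v, map_sum, hst,
      Finset.sum_mul_sum, Algebra.TensorProduct.tmul_mul_tmul, mul_apply, star_apply, sum_tmul,
      tmul_sum]
    simp_rw [Finset.sum_comm (s := (Finset.univ : Finset κ))
      (t := (Finset.univ : Finset (ι × κ)))]
    exact Finset.sum_comm
  rw [hsum, map_sum]
  refine nonnegC_sum fun p _ => ?_
  rw [map_sum]
  exact nonnegC_sum fun q _ => nonnegC_apply_rankOne st ω hω (v p q)

lemma nonnegC_apply_blockTensorSum_of_isPosElem (st : A₁ ⊗[C] A₂ →+ A₁ ⊗[C] A₂)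
    (hst : ∀ (a : A₁) (b : A₂), st (a ⊗ₜ[C] b) = star a ⊗ₜ[C] star b)
    (ω : Matrix ι ι (A₁ ⊗[C] A₂) →ₗ[C] C)
    (hω : ∀ U, NonnegC R (ω (of (fun i j => st (U j i)) * U)))
    {P : Matrix (ι × κ) (ι × κ) A₁} {Q : Matrix (ι × κ) (ι × κ) A₂}
    (hP : IsPosElem R C P) (hQ : IsPosElem R C Q) :
    NonnegC R (ω (blockTensorSum P Q)) := by
  have hP_star_mul_self (Y : Matrix (ι × κ) (ι × κ) A₂) :
      NonnegC R (ω (blockTensorSum P (star Y * Y))) :=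
    hP (ω ∘ₗ blockTensorSum.flip (star Y * Y)) fun X =>
      nonnegC_apply_blockTensorSum_star_mul_self st hst ω hω X Y
  exact hQ (ω ∘ₗ blockTensorSum P) hP_star_mul_self

end Positivity

open TensorProduct in
/-- An element `Φ^α` of `ℰ₁ ⊗_C ℰ₂` is represented as `Σᵢ x₁ᵢ^α ⊗ x₂ᵢ^α`. -/
theorem stmt_9_general {R C A₁ A₂ E₁ E₂ : Type*} [CommRing R] [LinearOrder R] [IsStrictOrderedRing R] [CommRing C]
    [Algebra R C] [Ring A₁] [StarRing A₁] [Algebra C A₁]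
    [Ring A₂] [StarRing A₂] [Algebra C A₂]
    (ip₁ : E₁ → E₁ → A₁)
    (ip₂ : E₂ → E₂ → A₂)
    -- complete positivity of both inner products
    (cp₁ : ∀ (k : ℕ) (x : Fin k → E₁),
      IsPosElem R C (Matrix.of fun α β => ip₁ (x α) (x β)))
    (cp₂ : ∀ (k : ℕ) (x : Fin k → E₂),
      IsPosElem R C (Matrix.of fun α β => ip₂ (x α) (x β)))
    -- the involution of the tensor product `*`-algebra `A₁ ⊗[C] A₂`
    (st : A₁ ⊗[C] A₂ → A₁ ⊗[C] A₂)
    (hst : ∀ (a : A₁) (b : A₂), st (a ⊗ₜ[C] b) = star a ⊗ₜ[C] star b)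
    (hstadd : ∀ u v, st (u + v) = st u + st v)
    (n N : ℕ) (x₁ : Fin n → Fin N → E₁) (x₂ : Fin n → Fin N → E₂) :
    ∀ ω : Matrix (Fin n) (Fin n) (A₁ ⊗[C] A₂) →ₗ[C] C,
      (∀ U : Matrix (Fin n) (Fin n) (A₁ ⊗[C] A₂),
        NonnegC R (ω ((Matrix.of fun i j => st (U j i)) * U))) →
      NonnegC R (ω (Matrix.of fun α β =>
        ∑ i, ∑ j, ip₁ (x₁ α i) (x₁ β j) ⊗ₜ[C] ip₂ (x₂ α i) (x₂ β j))) := by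
  intro ω hω
  convert nonnegC_apply_blockTensorSum_of_isPosElem (AddMonoidHom.mk' st hstadd) hst ω hω
    (isPosElem_gram_of_fin ip₁ cp₁ fun p : Fin n × Fin N => x₁ p.1 p.2)
    (isPosElem_gram_of_fin ip₂ cp₂ fun p : Fin n × Fin N => x₂ p.1 p.2) using 2
  ext α β
  rw [blockTensorSum_apply]
  rfl

open TensorProduct in
/-- the external tensor product of completely positive inner products
is completely positive.  The `*`-algebra structure on `A₁ ⊗_C A₂` is the tensor
product one; its involution `st` (determined by `st (a ⊗ b) = a* ⊗ b*`) is supplied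
as data.  An element `Φ^α` of `ℰ₁ ⊗_C ℰ₂` is represented as `Σᵢ x₁ᵢ^α ⊗ x₂ᵢ^α`, and
the matrix of external-tensor inner products of the `Φ^α` is positive: every
positive `C`-linear functional on `Mₙ(A₁ ⊗ A₂)` is nonnegative on it. -/
theorem stmt_9 {R C A₁ A₂ E₁ E₂ : Type*} [CommRing R] [LinearOrder R] [IsStrictOrderedRing R] [CommRing C]
    [StarRing C] [Algebra R C] [Ring A₁] [StarRing A₁] [Algebra C A₁]
    [Ring A₂] [StarRing A₂] [Algebra C A₂]
    [AddCommGroup E₁] [AddCommGroup E₂]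
    (sm₁ : E₁ → A₁ → E₁) (ip₁ : E₁ → E₁ → A₁)
    (sm₂ : E₂ → A₂ → E₂) (ip₂ : E₂ → E₂ → A₂)
    -- inner product axioms
    (herm₁ : ∀ x y, ip₁ x y = star (ip₁ y x))
    (add₁ : ∀ x y z, ip₁ x (y + z) = ip₁ x y + ip₁ x z)
    (lin₁ : ∀ x y a, ip₁ x (sm₁ y a) = ip₁ x y * a)
    (herm₂ : ∀ x y, ip₂ x y = star (ip₂ y x))
    (add₂ : ∀ x y z, ip₂ x (y + z) = ip₂ x y + ip₂ x z)
    (lin₂ : ∀ x y a, ip₂ x (sm₂ y a) = ip₂ x y * a)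
    -- complete positivity of both inner products
    (cp₁ : ∀ (k : ℕ) (x : Fin k → E₁),
      IsPosElem R C (Matrix.of fun α β => ip₁ (x α) (x β)))
    (cp₂ : ∀ (k : ℕ) (x : Fin k → E₂),
      IsPosElem R C (Matrix.of fun α β => ip₂ (x α) (x β)))
    -- the involution of the tensor product `*`-algebra `A₁ ⊗[C] A₂`
    (st : A₁ ⊗[C] A₂ → A₁ ⊗[C] A₂)
    (hst : ∀ (a : A₁) (b : A₂), st (a ⊗ₜ[C] b) = star a ⊗ₜ[C] star b)
    (hstadd : ∀ u v, st (u + v) = st u + st v)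
    (hstinv : ∀ u, st (st u) = u)
    (hstmul : ∀ u v, st (u * v) = st v * st u)
    (n N : ℕ) (x₁ : Fin n → Fin N → E₁) (x₂ : Fin n → Fin N → E₂) :
    ∀ ω : Matrix (Fin n) (Fin n) (A₁ ⊗[C] A₂) →ₗ[C] C,
      (∀ U : Matrix (Fin n) (Fin n) (A₁ ⊗[C] A₂),
        NonnegC R (ω ((Matrix.of fun i j => st (U j i)) * U))) →
      NonnegC R (ω (Matrix.of fun α β =>
        ∑ i, ∑ j, ip₁ (x₁ α i) (x₁ β j) ⊗ₜ[C] ip₂ (x₂ α i) (x₂ β j))) :=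
  stmt_9_general ip₁ ip₂ cp₁ cp₂ st hst hstadd n N x₁ x₂
end

section
/- Let 𝒜 be a unital *-algebra satisfying: for all n and all A ∈ Mₙ(𝒜), 1 + A*A is invertible. Then every idempotent e = e² ∈ Mₙ(𝒜) is equivalent to a projection: there exists P ∈ Mₙ(𝒜) with P = P² = P* and invertible elements relating e and P, i.e., eMₙ(𝒜)ᵏ ≅ PMₙ(𝒜)ᵏ as right modules (equivalently, e = uPu⁻¹ for some invertible u, or e and P are similar). -/
/-!
For an idempotent `e` with `f = e*`, the element `z = 1 + (e - f)* (e - f)` is self-adjoint and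
satisfies `e z = e f e = z e`, so it commutes with `e` and, taking adjoints, with `f`. When `z`
is invertible, `P = e f z⁻¹` is self-adjoint, `e P = P` and `P e = e f e z⁻¹ = e`. Two elements
with `e P = P` and `P e = e` are idempotents conjugate by `u = 1 + P - e`, whose inverse is
`1 + e - P`.
-/

section Ring

variable {R : Type*} [Ring R] {p q : R}

theorem mul_self_eq_of_mul_eq_of_mul_eq (hpq : p * q = q) (hqp : q * p = p) : q * q = q := by
  nth_rw 2 [← hpq]
  rw [← mul_assoc, hqp, hpq]

theorem one_add_sub_mul_one_add_sub_eq_one (hpq : p * q = q) (hqp : q * p = p) :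
    (1 + q - p) * (1 + p - q) = 1 := by
  have hp := mul_self_eq_of_mul_eq_of_mul_eq hqp hpq
  have hq := mul_self_eq_of_mul_eq_of_mul_eq hpq hqp
  simp only [mul_add, add_mul, mul_sub, sub_mul, one_mul, mul_one, hp, hq, hpq, hqp]
  abel

theorem exists_unit_conj_of_mul_eq_of_mul_eq (hpq : p * q = q) (hqp : q * p = p) :
    ∃ u : Rˣ, p = u.val * q * u.inv := by
  refine ⟨⟨1 + q - p, 1 + p - q, one_add_sub_mul_one_add_sub_eq_one hpq hqp,
    one_add_sub_mul_one_add_sub_eq_one hqp hpq⟩, ?_⟩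
  have hq := mul_self_eq_of_mul_eq_of_mul_eq hpq hqp
  simp only [mul_add, add_mul, mul_sub, sub_mul, one_mul, mul_one, hq, hpq, hqp]
  abel

end Ring

section StarRing

variable {R : Type*} [Ring R] [StarRing R]

def kaplanskyElement (e : R) : R :=
  1 + star (e - star e) * (e - star e)

theorem isSelfAdjoint_kaplanskyElement (e : R) : IsSelfAdjoint (kaplanskyElement e) :=
  (IsSelfAdjoint.one R).add (IsSelfAdjoint.star_mul_self _)

variable {e : R}

theorem mul_kaplanskyElement (he : e * e = e) : e * kaplanskyElement e = e * star e * e := by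
  have hf : star e * star e = star e := by rw [← star_mul, he]
  have he' : ∀ x : R, e * (e * x) = e * x := fun x => by rw [← mul_assoc, he]
  simp only [kaplanskyElement, star_sub, star_star, mul_add, mul_sub, sub_mul, mul_one,
    mul_assoc, he, hf, he']
  abel

theorem kaplanskyElement_mul (he : e * e = e) : kaplanskyElement e * e = e * star e * e := by
  have hf : star e * star e = star e := by rw [← star_mul, he]
  simp only [kaplanskyElement, star_sub, star_star, add_mul, mul_sub, sub_mul, one_mul,
    mul_assoc, he, hf]
  abel

theorem commute_kaplanskyElement (he : e * e = e) : Commute e (kaplanskyElement e) :=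
  (mul_kaplanskyElement he).trans (kaplanskyElement_mul he).symm

theorem commute_star_kaplanskyElement (he : e * e = e) :
    Commute (star e) (kaplanskyElement e) := by
  simpa only [(isSelfAdjoint_kaplanskyElement e).star_eq] using
    (commute_kaplanskyElement he).star_star

theorem exists_isStarProjection_of_isUnit_kaplanskyElement (he : e * e = e)
    (hz : IsUnit (kaplanskyElement e)) :
    ∃ P : R, IsStarProjection P ∧ e * P = P ∧ P * e = e := by
  obtain ⟨w, hw⟩ := hz
  set v : R := ↑w⁻¹
  have hev : Commute e v := (hw ▸ commute_kaplanskyElement he).units_inv_right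
  have hfv : Commute (star e) v := (hw ▸ commute_star_kaplanskyElement he).units_inv_right
  have hv : IsSelfAdjoint v := by
    have h := (hw ▸ isSelfAdjoint_kaplanskyElement e).ringInverse
    rwa [Ring.inverse_unit] at h
  have heP : e * (e * star e * v) = e * star e * v := by rw [← mul_assoc, ← mul_assoc, he]
  have hPe : e * star e * v * e = e := by
    rw [mul_assoc, hev.symm.eq, ← mul_assoc, ← mul_kaplanskyElement he, ← hw, mul_assoc,
      w.mul_inv, mul_one]
  refine ⟨e * star e * v, ⟨?_, ?_⟩, heP, hPe⟩
  · rw [IsIdempotentElem, ← mul_assoc, ← mul_assoc, hPe]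
  · rw [IsSelfAdjoint, star_mul, star_mul, star_star, hv.star_eq, ← mul_assoc, hev.symm.eq,
      mul_assoc, hfv.symm.eq, mul_assoc]

end StarRing

/-- Kaplansky: if `𝒜` is a unital `*`-algebra such that `1 + A*A` is
invertible in every matrix algebra over `𝒜`, then every idempotent `e ∈ Mₙ(𝒜)` is
equivalent (similar) to a projection `P = P² = P*`. -/
theorem stmt_11 {A : Type*} [Ring A] [StarRing A]
    (hI : ∀ (m : ℕ) (M : Matrix (Fin m) (Fin m) A), IsUnit (1 + star M * M))
    (n : ℕ) (e : Matrix (Fin n) (Fin n) A) (he : e * e = e) :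
    ∃ (P : Matrix (Fin n) (Fin n) A) (u : (Matrix (Fin n) (Fin n) A)ˣ),
      P * P = P ∧ star P = P ∧ e = u.val * P * u.inv := by
  obtain ⟨P, hP, heP, hPe⟩ :=
    exists_isStarProjection_of_isUnit_kaplanskyElement he (hI n (e - star e))
  obtain ⟨u, hu⟩ := exists_unit_conj_of_mul_eq_of_mul_eq heP hPe
  exact ⟨P, u, hP.isIdempotentElem, hP.isSelfAdjoint, hu⟩
end
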